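/- Let D and V be normed spaces with D continuously embedded in V with ‖v‖_V ≤ ‖v‖_D for all v ∈ D. Suppose D = W̃ ⊕ Z (direct sum of subspaces), let Z̃: D → ℝ^S be linear, let C_P := sup_{h ∉ ker Z̃} ‖P_{W̃}^{Z} h‖_D / ‖Z̃ h‖ < ∞, and let β := inf_{Θ ∈ Z, Θ≠0} ‖Θ‖_D² / ‖Θ‖_V². If β ≥ 4ξ and λ ≥ C_P²(2ξ+1) for some ξ > 0, then for every z ∈ D: ‖z‖_D² + λ‖Z̃ z‖² ≥ ξ‖z‖_V². -/

import Mathlib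

/-!
Split `z = Θ + ϑ` with `Θ ∈ Z` and `ϑ` the projection of `z` onto `W̃`. The Poincaré bound
controls the `V`-norm of `Θ` by its `D`-norm, which is at most `‖z‖ + ‖ϑ‖`; the `V`-norm of `ϑ`
is at most its `D`-norm. Hence `ξ‖z‖_V²` is bounded by `‖z‖_D² + (2ξ + 1)‖ϑ‖_D²`, and
`‖ϑ‖_D ≤ C_P ‖Z̃ z‖` turns the last term into `λ‖Z̃ z‖²`.
-/

lemma norm_add_sq_le_two_mul {E : Type*} [SeminormedAddGroup E] (x y : E) :
    ‖x + y‖ ^ 2 ≤ 2 * (‖x‖ ^ 2 + ‖y‖ ^ 2) :=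
  (pow_le_pow_left₀ (norm_nonneg _) (norm_add_le x y) 2).trans add_sq_le

lemma mul_norm_map_add_sq_le {E F 𝓕 : Type*} [SeminormedAddCommGroup E]
    [SeminormedAddCommGroup F] [FunLike 𝓕 E F] [AddMonoidHomClass 𝓕 E F]
    (ι : 𝓕) (hι : ∀ v, ‖ι v‖ ≤ ‖v‖) {β ξ : ℝ} (hξ : 0 ≤ ξ) (hβξ : 4 * ξ ≤ β)
    {Θ ϑ : E} (hΘ : β * ‖ι Θ‖ ^ 2 ≤ ‖Θ‖ ^ 2) :
    ξ * ‖ι (Θ + ϑ)‖ ^ 2 ≤ ‖Θ + ϑ‖ ^ 2 + (2 * ξ + 1) * ‖ϑ‖ ^ 2 := by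
  have hιsplit : ‖ι (Θ + ϑ)‖ ^ 2 ≤ 2 * (‖ι Θ‖ ^ 2 + ‖ι ϑ‖ ^ 2) := by
    simpa only [map_add] using norm_add_sq_le_two_mul (ι Θ) (ι ϑ)
  have hιϑ : ‖ι ϑ‖ ^ 2 ≤ ‖ϑ‖ ^ 2 := pow_le_pow_left₀ (norm_nonneg _) (hι ϑ) 2
  have hΘsplit : ‖Θ‖ ^ 2 ≤ 2 * (‖Θ + ϑ‖ ^ 2 + ‖ϑ‖ ^ 2) := by
    simpa only [add_neg_cancel_right, norm_neg] using norm_add_sq_le_two_mul (Θ + ϑ) (-ϑ)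
  have hιΘ : 4 * ξ * ‖ι Θ‖ ^ 2 ≤ β * ‖ι Θ‖ ^ 2 :=
    mul_le_mul_of_nonneg_right hβξ (sq_nonneg _)
  linarith [mul_le_mul_of_nonneg_left hιsplit hξ, mul_le_mul_of_nonneg_left hιϑ hξ]

theorem stmt8_general {D V : Type*} [NormedAddCommGroup D] [NormedSpace ℝ D]
    [NormedAddCommGroup V] [NormedSpace ℝ V]
    (ι : D →L[ℝ] V) (hι : ∀ v, ‖ι v‖ ≤ ‖v‖)
    (Wt Z : Submodule ℝ D) (hc : IsCompl Wt Z)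
    (S : ℕ) (Zt : D →ₗ[ℝ] EuclideanSpace ℝ (Fin S))
    (CP β ξ lam : ℝ)
    (hCP : ∀ h : D, ‖((Wt.linearProjOfIsCompl Z hc) h : D)‖ ≤ CP * ‖Zt h‖)
    (hβ : ∀ Θ ∈ Z, β * ‖ι Θ‖ ^ 2 ≤ ‖Θ‖ ^ 2)
    (hξ : 0 < ξ) (hβξ : 4 * ξ ≤ β) (hlam : CP ^ 2 * (2 * ξ + 1) ≤ lam) :
    ∀ z : D, ξ * ‖ι z‖ ^ 2 ≤ ‖z‖ ^ 2 + lam * ‖Zt z‖ ^ 2 := by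
  intro z
  set ϑ : D := Wt.projection Z hc z
  have hΘ : z - ϑ ∈ Z := Submodule.sub_projection_mem hc z
  have hϑ : ‖ϑ‖ ^ 2 ≤ CP ^ 2 * ‖Zt z‖ ^ 2 := by
    rw [← mul_pow]
    exact pow_le_pow_left₀ (norm_nonneg _) (hCP z) 2
  calc ξ * ‖ι z‖ ^ 2 ≤ ‖z‖ ^ 2 + (2 * ξ + 1) * ‖ϑ‖ ^ 2 := by
        simpa only [sub_add_cancel] using
          mul_norm_map_add_sq_le ι hι hξ.le hβξ (hβ _ hΘ) (ϑ := ϑ)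
    _ ≤ ‖z‖ ^ 2 + (2 * ξ + 1) * (CP ^ 2 * ‖Zt z‖ ^ 2) := by gcongr
    _ ≤ ‖z‖ ^ 2 + lam * ‖Zt z‖ ^ 2 := by
      rw [← mul_assoc, mul_comm (2 * ξ + 1)]
      gcongr

/-- Key coercivity inequality: if `β ≥ 4ξ` and `λ ≥ C_P²(2ξ+1)` then
`‖z‖_D² + λ‖Z̃ z‖² ≥ ξ‖z‖_V²` for all `z ∈ D`. -/
theorem stmt8 {D V : Type*} [NormedAddCommGroup D] [NormedSpace ℝ D]
    [NormedAddCommGroup V] [NormedSpace ℝ V]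
    (ι : D →L[ℝ] V) (hι : ∀ v, ‖ι v‖ ≤ ‖v‖)
    (Wt Z : Submodule ℝ D) (hc : IsCompl Wt Z)
    (S : ℕ) (Zt : D →ₗ[ℝ] EuclideanSpace ℝ (Fin S))
    (hker : ∀ z ∈ Z, Zt z = 0)
    (CP β ξ lam : ℝ)
    (hCP : ∀ h : D, ‖((Wt.linearProjOfIsCompl Z hc) h : D)‖ ≤ CP * ‖Zt h‖)
    (hβ : ∀ Θ ∈ Z, β * ‖ι Θ‖ ^ 2 ≤ ‖Θ‖ ^ 2)
    (hξ : 0 < ξ) (hβξ : 4 * ξ ≤ β) (hlam : CP ^ 2 * (2 * ξ + 1) ≤ lam) :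
    ∀ z : D, ξ * ‖ι z‖ ^ 2 ≤ ‖z‖ ^ 2 + lam * ‖Zt z‖ ^ 2 :=
  stmt8_general ι hι Wt Z hc S Zt CP β ξ lam hCP hβ hξ hβξ hlam
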